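/- Let h, x ∈ L and N ∈ ℤ satisfy [h, x] = N·x. Then for every a ∈ A, every r ∈ ℤ_{≥0}, and every χ ∈ 𝓕, the following identity holds in U(L ⊗ A): p_h(χ) (x ⊗ a)^{(r)} = Σ_{ψ ∈ 𝓢_r(χ)} ( Π_{φ ∈ supp ψ} ( C(−N + |φ| − 1, |φ|) · m(φ) · (x ⊗ a·π(φ)) )^{(ψ(φ))} ) · p_h(χ − Σ_{φ∈𝓕} ψ(φ)·φ), where C(z,k) := z(z−1)⋯(z−k+1)/k! for z ∈ ℤ and k ∈ ℤ_{≥0} (the factors in the product over φ commute, so the product is well defined). -/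

import Mathlib

open scoped TensorProduct

noncomputable section

set_option linter.unusedSectionVars false
set_option linter.unusedVariables false

namespace MapSuper

variable (A : Type*) [DecidableEq A]

/-- `|χ|`, the total size of a finitely supported multiset `χ ∈ 𝓕 = (A →₀ ℕ)`. -/
def wt (χ : A →₀ ℕ) : ℕ := χ.sum fun _ n => n

lemma wt_add (χ φ : A →₀ ℕ) : wt A (χ + φ) = wt A χ + wt A φ :=
  Finsupp.sum_add_index' (fun _ => rfl) (fun _ _ _ => rfl)

lemma wt_pos {ψ : A →₀ ℕ} (h : ψ ≠ 0) : 0 < wt A ψ := by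
  rcases Nat.eq_zero_or_pos (wt A ψ) with h0 | h1
  · exfalso
    apply h
    ext a
    by_cases ha : a ∈ ψ.support
    · exact Finset.sum_eq_zero_iff.mp h0 a ha
    · simpa using Finsupp.notMem_support_iff.mp ha
  · exact h1

lemma wt_sub_lt {χ ψ : A →₀ ℕ} (hle : ψ ≤ χ) (hne : ψ ≠ 0) : wt A (χ - ψ) < wt A χ := by
  have h1 : wt A (χ - ψ) + wt A ψ = wt A χ := by
    rw [← wt_add, tsub_add_cancel_of_le hle]
  have := wt_pos A hne
  omega

/-- The multinomial coefficient `m(ψ) = |ψ|! / ∏_a ψ(a)!`. -/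
def mc (ψ : A →₀ ℕ) : ℕ := Nat.multinomial ψ.support ψ

-- ### Combinatorial lemmas
lemma wt_single (a : A) (n : ℕ) : wt A (Finsupp.single a n) = n := by
  simp [wt, Finsupp.sum_single_index]

lemma wt_zero : wt A (0 : A →₀ ℕ) = 0 := by simp [wt]

lemma mc_zero : mc A (0 : A →₀ ℕ) = 1 := by
  simp [mc]

lemma support_subset_of_le {φ μ : A →₀ ℕ} (h : φ ≤ μ) : φ.support ⊆ μ.support := by
  intro a ha
  rw [Finsupp.mem_support_iff] at ha ⊢
  have := h a
  omega

lemma prod_factorial_mul_mc (s : Finset A) (φ : A →₀ ℕ) (hs : φ.support ⊆ s) :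
    (∏ a ∈ s, (φ a).factorial) * mc A φ = (wt A φ).factorial := by
  have h1 : (∏ a ∈ s, (φ a).factorial) = ∏ a ∈ φ.support, (φ a).factorial := by
    refine (Finset.prod_subset hs ?_).symm
    intro a _ ha
    rw [Finsupp.notMem_support_iff.mp ha]
    rfl
  rw [h1, mc, Nat.multinomial_spec]
  rfl
lemma sum_Iic_single_add {M : Type*} [AddCommMonoid M] (a : A) (n : ℕ) (μ' : A →₀ ℕ)
    (ha : μ' a = 0) (g : (A →₀ ℕ) → M) :
    ∑ φ ∈ Finset.Iic (Finsupp.single a n + μ'), g φ =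
      ∑ k ∈ Finset.range (n + 1), ∑ φ' ∈ Finset.Iic μ', g (Finsupp.single a k + φ') := by
  rw [← Finset.sum_product']
  refine Finset.sum_nbij' (fun φ => (φ a, φ.erase a)) (fun q => Finsupp.single a q.1 + q.2)
    ?_ ?_ ?_ ?_ ?_
  · intro φ hφ
    rw [Finset.mem_Iic] at hφ
    rw [Finset.mem_product, Finset.mem_range, Finset.mem_Iic]
    dsimp only
    constructor
    · have := hφ a
      simp [ha] at this
      omega
    · intro b
      by_cases hb : b = a
      · subst hb; simp [ha]
      · have hab : a ≠ b := fun h => hb h.symm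
        have := hφ b
        simp [Finsupp.single_eq_of_ne' hab, Finsupp.erase_ne hb] at this ⊢
        omega
  · intro q hq
    rw [Finset.mem_product, Finset.mem_range, Finset.mem_Iic] at hq
    rw [Finset.mem_Iic]
    intro b
    by_cases hb : b = a
    · subst hb
      have h2 : q.2 b ≤ μ' b := hq.2 b
      simp [ha] at h2 ⊢
      omega
    · have hab : a ≠ b := fun h => hb h.symm
      have h2 : q.2 b ≤ μ' b := hq.2 b
      simp [Finsupp.single_eq_of_ne' hab]
      omega
  · intro φ hφ
    rw [Finset.mem_Iic] at hφ
    dsimp only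
    rw [Finsupp.single_add_erase]
  · intro q hq
    rw [Finset.mem_product, Finset.mem_range, Finset.mem_Iic] at hq
    have h2 : q.2 a = 0 := by have := hq.2 a; omega
    obtain ⟨k, ψ⟩ := q
    dsimp only at h2 ⊢
    simp only [Prod.mk.injEq]
    constructor
    · simp [h2]
    · ext b
      by_cases hb : b = a
      · subst hb; simp [Finsupp.erase_same, h2]
      · have hab : a ≠ b := fun h => hb h.symm
        simp [Finsupp.erase_ne hb, Finsupp.single_eq_of_ne' hab]
  · intro φ hφ
    dsimp only
    rw [Finsupp.single_add_erase]

lemma vandermonde_finsupp (μ : A →₀ ℕ) :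
    ∀ j : ℕ, ∑ φ ∈ (Finset.Iic μ).filter (fun φ => wt A φ = j),
      ∏ a ∈ μ.support, Nat.choose (μ a) (φ a) = Nat.choose (wt A μ) j := by
  induction μ using Finsupp.induction with
  | zero =>
    intro j
    have h1 : Finset.Iic (0 : A →₀ ℕ) = {0} := by
      ext φ; simp [Finset.mem_Iic, le_zero_iff]
    rw [h1, wt_zero]
    rcases Nat.eq_zero_or_pos j with hj | hj
    · subst hj
      rw [Finset.filter_singleton, if_pos (wt_zero A)]
      simp
    · rw [Finset.filter_singleton, if_neg (by rw [wt_zero]; omega)]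
      simp [Nat.choose_eq_zero_of_lt hj]
  | single_add a n μ' hna hn ih =>
    intro j
    have ha' : μ' a = 0 := Finsupp.notMem_support_iff.mp hna
    rw [Finset.sum_filter, sum_Iic_single_add A a n μ' ha']
    have hsupp : (Finsupp.single a n + μ').support = insert a μ'.support := by
      rw [Finsupp.support_add_eq, Finsupp.support_single_ne_zero a hn]
      · rfl
      · rw [Finsupp.support_single_ne_zero a hn]
        simp [Finset.disjoint_singleton_left, hna]
    have key : ∀ k ∈ Finset.range (n+1), ∀ φ' ∈ Finset.Iic μ',
        (if wt A (Finsupp.single a k + φ') = j then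
          ∏ b ∈ (Finsupp.single a n + μ').support,
            Nat.choose ((Finsupp.single a n + μ') b) ((Finsupp.single a k + φ') b)
        else 0) =
        Nat.choose n k * (if k + wt A φ' = j then
          ∏ b ∈ μ'.support, Nat.choose (μ' b) (φ' b) else 0) := by
      intro k hk φ' hφ'
      rw [Finset.mem_Iic] at hφ'
      have hφa : φ' a = 0 := by have := hφ' a; omega
      have hwt : wt A (Finsupp.single a k + φ') = k + wt A φ' := by
        rw [wt_add, wt_single]
      have hprod : ∏ b ∈ (Finsupp.single a n + μ').support,
            Nat.choose ((Finsupp.single a n + μ') b) ((Finsupp.single a k + φ') b) =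
          Nat.choose n k * ∏ b ∈ μ'.support, Nat.choose (μ' b) (φ' b) := by
        rw [hsupp, Finset.prod_insert hna]
        congr 1
        · simp [ha', hφa]
        · refine Finset.prod_congr rfl ?_
          intro b hb
          have hab : a ≠ b := fun h => hna (h ▸ hb)
          simp [Finsupp.single_eq_of_ne' hab]
      rw [hwt, hprod]
      split_ifs <;> simp
    rw [Finset.sum_congr rfl (fun k hk => Finset.sum_congr rfl (fun φ' hφ' => key k hk φ' hφ'))]
    have inner : ∀ k : ℕ, ∑ φ' ∈ Finset.Iic μ',
        (if k + wt A φ' = j then ∏ b ∈ μ'.support, Nat.choose (μ' b) (φ' b) else 0) =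
        if k ≤ j then Nat.choose (wt A μ') (j - k) else 0 := by
      intro k
      by_cases hkj : k ≤ j
      · rw [if_pos hkj, ← ih (j - k), Finset.sum_filter]
        refine Finset.sum_congr rfl ?_
        intro φ' _
        have : (k + wt A φ' = j) ↔ (wt A φ' = j - k) := by omega
        simp only [this]
      · rw [if_neg hkj]
        refine Finset.sum_eq_zero ?_
        intro φ' _
        rw [if_neg (by omega)]
    simp only [← Finset.mul_sum, inner]
    rw [wt_add, wt_single, Nat.add_choose_eq,
      Finset.Nat.sum_antidiagonal_eq_sum_range_succ_mk]
    have e1 : ∑ k ∈ Finset.range (n + 1),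
        Nat.choose n k * (if k ≤ j then Nat.choose (wt A μ') (j - k) else 0) =
        ∑ k ∈ Finset.range (n + j + 1),
        Nat.choose n k * (if k ≤ j then Nat.choose (wt A μ') (j - k) else 0) := by
      refine Finset.sum_subset (by intro k hk; simp at hk ⊢; omega) ?_
      intro k _ hk
      simp only [Finset.mem_range, not_lt] at hk
      rw [Nat.choose_eq_zero_of_lt (by omega), zero_mul]
    have e2 : ∑ k ∈ Finset.range (n + j + 1),
        Nat.choose n k * (if k ≤ j then Nat.choose (wt A μ') (j - k) else 0) =
        ∑ k ∈ Finset.range (j + 1),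
        Nat.choose n k * Nat.choose (wt A μ') (j - k) := by
      rw [← Finset.sum_subset (s₁ := Finset.range (j+1))
        (by intro k hk; simp at hk ⊢; omega) ?_]
      · refine Finset.sum_congr rfl ?_
        intro k hk
        simp only [Finset.mem_range] at hk
        rw [if_pos (by omega)]
      · intro k _ hk
        simp only [Finset.mem_range, not_lt] at hk
        rw [if_neg (by omega), mul_zero]
    rw [e1, e2]

lemma wt_le_of_le {φ μ : A →₀ ℕ} (h : φ ≤ μ) : wt A φ ≤ wt A μ := by
  have : wt A φ + wt A (μ - φ) = wt A μ := by
    rw [← wt_add, add_tsub_cancel_of_le h]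
  omega

lemma wt_tsub {φ μ : A →₀ ℕ} (h : φ ≤ μ) : wt A (μ - φ) = wt A μ - wt A φ := by
  have : wt A φ + wt A (μ - φ) = wt A μ := by
    rw [← wt_add, add_tsub_cancel_of_le h]
  omega

lemma mc_mul_mc (φ μ : A →₀ ℕ) (h : φ ≤ μ) :
    mc A φ * mc A (μ - φ) * Nat.choose (wt A μ) (wt A φ) =
      mc A μ * ∏ a ∈ μ.support, Nat.choose (μ a) (φ a) := by
  have hs1 : φ.support ⊆ μ.support := support_subset_of_le A h
  have hs2 : (μ - φ).support ⊆ μ.support := support_subset_of_le A tsub_le_self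
  have hwt : wt A φ + wt A (μ - φ) = wt A μ := by
    rw [← wt_add, add_tsub_cancel_of_le h]
  have hwtle : wt A φ ≤ wt A μ := by omega
  set E := (∏ a ∈ μ.support, (φ a).factorial) *
    (∏ a ∈ μ.support, ((μ - φ) a).factorial) with hE
  have hEpos : 0 < E :=
    Nat.mul_pos (Finset.prod_pos fun _ _ => Nat.factorial_pos _)
      (Finset.prod_pos fun _ _ => Nat.factorial_pos _)
  apply Nat.eq_of_mul_eq_mul_right hEpos
  have lhs_eq : mc A φ * mc A (μ - φ) * Nat.choose (wt A μ) (wt A φ) * E =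
      (wt A μ).factorial := by
    have h1 := prod_factorial_mul_mc A μ.support φ hs1
    have h2 := prod_factorial_mul_mc A μ.support (μ - φ) hs2
    have h3 : Nat.choose (wt A μ) (wt A φ) *
        ((wt A φ).factorial * (wt A μ - wt A φ).factorial) = (wt A μ).factorial := by
      rw [← mul_assoc]; exact Nat.choose_mul_factorial_mul_factorial hwtle
    have h4 : wt A (μ - φ) = wt A μ - wt A φ := by omega
    calc mc A φ * mc A (μ - φ) * Nat.choose (wt A μ) (wt A φ) * E
        = Nat.choose (wt A μ) (wt A φ) *
            (((∏ a ∈ μ.support, (φ a).factorial) * mc A φ) *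
             ((∏ a ∈ μ.support, ((μ - φ) a).factorial) * mc A (μ - φ))) := by
          rw [hE]; ring
      _ = Nat.choose (wt A μ) (wt A φ) *
            ((wt A φ).factorial * (wt A μ - wt A φ).factorial) := by
          rw [h1, h2, h4]
      _ = (wt A μ).factorial := h3
  have rhs_eq : mc A μ * (∏ a ∈ μ.support, Nat.choose (μ a) (φ a)) * E =
      (wt A μ).factorial := by
    have h1 := prod_factorial_mul_mc A μ.support μ (le_refl _)
    have h5 : (∏ a ∈ μ.support, Nat.choose (μ a) (φ a)) * E =
        ∏ a ∈ μ.support, (μ a).factorial := by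
      rw [hE, ← mul_assoc, ← Finset.prod_mul_distrib, ← Finset.prod_mul_distrib]
      refine Finset.prod_congr rfl ?_
      intro a _
      have hle : φ a ≤ μ a := h a
      rw [Finsupp.tsub_apply]
      exact Nat.choose_mul_factorial_mul_factorial hle
    rw [mul_assoc, h5, mul_comm, h1]
  rw [lhs_eq, rhs_eq]

lemma sum_mc_mul_mc (μ : A →₀ ℕ) (j : ℕ) (hj : j ≤ wt A μ) :
    ∑ φ ∈ (Finset.Iic μ).filter (fun φ => wt A φ = j), mc A φ * mc A (μ - φ) = mc A μ := by
  have hpos : 0 < Nat.choose (wt A μ) j := Nat.choose_pos hj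
  apply Nat.eq_of_mul_eq_mul_right hpos
  rw [Finset.sum_mul]
  have : ∀ φ ∈ (Finset.Iic μ).filter (fun φ => wt A φ = j),
      mc A φ * mc A (μ - φ) * Nat.choose (wt A μ) j =
      mc A μ * ∏ a ∈ μ.support, Nat.choose (μ a) (φ a) := by
    intro φ hφ
    rw [Finset.mem_filter, Finset.mem_Iic] at hφ
    rw [← hφ.2]
    exact mc_mul_mc A φ μ hφ.1
  rw [Finset.sum_congr rfl this, ← Finset.mul_sum, vandermonde_finsupp A μ j]


variable [CommRing A] [Algebra ℂ A]
variable (L : Type*) [LieRing L] [LieAlgebra ℂ L]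

/-- `π(ψ) = ∏_a a^{ψ(a)} ∈ A`. -/
def piF (ψ : A →₀ ℕ) : A := ψ.prod fun a n => a ^ n

instance : LieAlgebra ℂ (A ⊗[ℂ] L) where
  lie_smul c x y := by
    rw [← algebraMap_smul A c y, lie_smul, algebraMap_smul]

/-- The universal enveloping algebra `U(L ⊗ A)` of the map Lie algebra `L ⊗ A`
(realized as `A ⊗[ℂ] L` with bracket `⁅x ⊗ a, y ⊗ b⁆ = ⁅x, y⁆ ⊗ ab`). -/
abbrev UEA := UniversalEnvelopingAlgebra ℂ (A ⊗[ℂ] L)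

/-- The element `x ⊗ a` of `U(L ⊗ A)`. -/
def emb (x : L) (a : A) : UEA A L := UniversalEnvelopingAlgebra.ι ℂ (a ⊗ₜ[ℂ] x)

/-- The divided power `u^{(r)} = u^r / r!`. -/
def dp (u : UEA A L) (r : ℕ) : UEA A L := ((r.factorial : ℂ)⁻¹) • u ^ r

/-- The elements `p_h(χ)`, defined recursively by `p_h(0) = 1` and, for `χ ≠ 0`,
`p_h(χ) = -(1/|χ|) ∑_{0 ≠ ψ ≤ χ} m(ψ) (h ⊗ π(ψ)) p_h(χ - ψ)`. -/
def p (h : L) (χ : A →₀ ℕ) : UEA A L :=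
  if hχ : χ = 0 then 1
  else (-(1 / (wt A χ : ℂ))) •
    ∑ ψ ∈ ((Finset.Iic χ).erase 0).attach,
      (mc A ψ.1 : ℂ) • (emb A L h (piF A ψ.1) * p h (χ - ψ.1))
termination_by wt A χ
decreasing_by
  have hm := ψ.2
  rw [Finset.mem_erase, Finset.mem_Iic] at hm
  exact wt_sub_lt A hm.2 hm.1

lemma commute_emb {x y : L} (hxy : ⁅x, y⁆ = 0) (a b : A) :
    Commute (emb A L x a) (emb A L y b) := by
  letI : LieRing (UEA A L) := LieRing.ofAssociativeRing
  unfold emb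
  rw [commute_iff_lie_eq, ← LieHom.map_lie, LieAlgebra.ExtendScalars.bracket_tmul, hxy,
    TensorProduct.tmul_zero, map_zero]

lemma commute_dp {x y : L} (hxy : ⁅x, y⁆ = 0) (a b : A) (r s : ℕ) :
    Commute (dp A L (emb A L x a) r) (dp A L (emb A L y b) s) :=
  (((commute_emb A L hxy a b).pow_pow r s).smul_left _).smul_right _

lemma commute_smul_dp {x y : L} (hxy : ⁅x, y⁆ = 0) (c d : ℂ) (a b : A) (r s : ℕ) :
    Commute (dp A L (c • emb A L x a) r) (dp A L (d • emb A L y b) s) :=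
  (((((commute_emb A L hxy a b).smul_left c).smul_right d).pow_pow r s).smul_left _).smul_right _

lemma commute_smul_dp' {x y : L} (hxy : ⁅x, y⁆ = 0) (c d : ℂ) (a b : A) (r s : ℕ) :
    Commute (c • dp A L (emb A L x a) r) (d • dp A L (emb A L y b) s) :=
  ((commute_dp A L hxy a b r s).smul_left c).smul_right d

/-- The submodule of elements of `U(L ⊗ A)` of degree at most `n`: the image, under the
canonical map `T(L ⊗ A) → U(L ⊗ A)`, of the sum of the homogeneous components of the tensor
algebra of degree at most `n`. -/
def degLE (n : ℕ) : Submodule ℂ (UEA A L) :=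
  Submodule.map (UniversalEnvelopingAlgebra.mkAlgHom ℂ (A ⊗[ℂ] L)).toLinearMap
    (⨆ i ∈ Set.Iic n,
      (LinearMap.range (TensorAlgebra.ι ℂ : (A ⊗[ℂ] L) →ₗ[ℂ] TensorAlgebra ℂ (A ⊗[ℂ] L))) ^ i)

/-- `C(z, k) = z(z-1)⋯(z-k+1)/k!`. -/
def intC (z : ℤ) (k : ℕ) : ℂ :=
  (∏ i ∈ Finset.range k, ((z : ℂ) - (i : ℂ))) / (k.factorial : ℂ)

/-- Garland's elements `D^x_{j,k}(d, c) = ∑_{λ ∈ 𝓟_k(j)} ∏_{m ∈ supp λ} (x ⊗ d^m c)^{(λ(m))}`,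
where `𝓟_k(j)` is the set of finitely supported `λ : ℕ → ℕ` with `∑_m λ(m)·m = j` and
`∑_m λ(m) = k`. -/
def D (x : L) (j k : ℕ) (d c : A) : UEA A L :=
  ∑ᶠ (lam : ℕ →₀ ℕ) (_ : lam.sum (fun m t => t * m) = j ∧ lam.sum (fun _ t => t) = k),
    lam.support.noncommProd (fun m => dp A L (emb A L x (d ^ m * c)) (lam m))
      (fun m _ m' _ _ => commute_dp A L (lie_self x) _ _ _ _)


lemma intC_zero (z : ℤ) : intC z 0 = 1 := by simp [intC]

lemma intC_pascal (z : ℤ) (k : ℕ) : intC (z + 1) (k + 1) = intC z (k + 1) + intC z k := by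
  have hP1 : (∏ i ∈ Finset.range (k+1), (((z+1 : ℤ) : ℂ) - (i : ℂ))) =
      (∏ i ∈ Finset.range k, ((z : ℂ) - (i : ℂ))) * ((z : ℂ) + 1) := by
    rw [Finset.prod_range_succ']
    push_cast
    congr 1
    · refine Finset.prod_congr rfl ?_
      intro i _
      push_cast
      ring
    · ring
  have hP2 : (∏ i ∈ Finset.range (k+1), ((z : ℂ) - (i : ℂ))) =
      (∏ i ∈ Finset.range k, ((z : ℂ) - (i : ℂ))) * ((z : ℂ) - k) := by
    rw [Finset.prod_range_succ]
  have hf : ((k+1).factorial : ℂ) = ((k+1 : ℕ) : ℂ) * (k.factorial : ℂ) := by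
    rw [Nat.factorial_succ]; push_cast; ring
  have h1 : ((k : ℕ).factorial : ℂ) ≠ 0 := Nat.cast_ne_zero.mpr (Nat.factorial_ne_zero k)
  have h2 : ((k : ℕ) : ℂ) + 1 ≠ 0 := by
    have : (((k+1 : ℕ)) : ℂ) ≠ 0 := Nat.cast_ne_zero.mpr (Nat.succ_ne_zero k)
    push_cast at this
    exact this
  rw [intC, intC, intC, hP1, hP2, hf]
  push_cast
  field_simp
  ring

lemma intC_succ_mul (z : ℤ) (m : ℕ) :
    ((m + 1 : ℕ) : ℂ) * intC z (m + 1) = ((z : ℂ) - m) * intC z m := by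
  have hP2 : (∏ i ∈ Finset.range (m+1), ((z : ℂ) - (i : ℂ))) =
      (∏ i ∈ Finset.range m, ((z : ℂ) - (i : ℂ))) * ((z : ℂ) - m) := by
    rw [Finset.prod_range_succ]
  have hf : ((m+1).factorial : ℂ) = ((m+1 : ℕ) : ℂ) * (m.factorial : ℂ) := by
    rw [Nat.factorial_succ]; push_cast; ring
  have h1 : ((m : ℕ).factorial : ℂ) ≠ 0 := Nat.cast_ne_zero.mpr (Nat.factorial_ne_zero m)
  have h2 : ((m : ℕ) : ℂ) + 1 ≠ 0 := by
    have : (((m+1 : ℕ)) : ℂ) ≠ 0 := Nat.cast_ne_zero.mpr (Nat.succ_ne_zero m)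
    push_cast at this
    exact this
  rw [intC, intC, hP2, hf]
  push_cast
  field_simp

lemma intC_hockey (N : ℤ) : ∀ k : ℕ,
    ∑ j ∈ Finset.range (k + 1), intC (-N + (j : ℤ) - 1) j = intC (-N + (k : ℤ)) k := by
  intro k
  induction k with
  | zero => simp [intC_zero]
  | succ m ih =>
    rw [Finset.sum_range_succ, ih]
    have h1 : (-N + ((m+1 : ℕ) : ℤ) - 1) = -N + (m : ℤ) := by push_cast; ring
    have h2 : (-N + ((m+1 : ℕ) : ℤ)) = (-N + (m : ℤ)) + 1 := by push_cast; ring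
    rw [h1, h2, intC_pascal]
    ring

/-- the coefficient `c_φ = C(-N+|φ|-1, |φ|) m(φ)`. -/
def cf (N : ℤ) (φ : A →₀ ℕ) : ℂ :=
  intC (-N + (wt A φ : ℤ) - 1) (wt A φ) * (mc A φ : ℂ)

lemma cf_zero (N : ℤ) : cf A N 0 = 1 := by
  simp [cf, wt_zero, mc_zero, intC_zero]

lemma eq_of_le_of_wt_eq {φ μ : A →₀ ℕ} (h : φ ≤ μ) (hw : wt A φ = wt A μ) : φ = μ := by
  have h1 : wt A (μ - φ) = 0 := by rw [wt_tsub A h]; omega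
  have h2 : μ - φ = 0 := by
    by_contra hne
    have := wt_pos A hne
    omega
  have := tsub_eq_zero_iff_le.mp h2
  exact le_antisymm h this

lemma wt_lt_of_lt {φ μ : A →₀ ℕ} (h : φ ≤ μ) (hne : φ ≠ μ) : wt A φ < wt A μ := by
  have h1 := wt_le_of_le A h
  rcases lt_or_eq_of_le h1 with h2 | h2
  · exact h2
  · exact absurd (eq_of_le_of_wt_eq A h h2) hne

lemma L5 (N : ℤ) (μ : A →₀ ℕ) (hμ : μ ≠ 0) :
    (N : ℂ) * ∑ ψ ∈ (Finset.Iic μ).erase 0, (mc A ψ : ℂ) * cf A N (μ - ψ) =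
      -((wt A μ : ℂ)) * cf A N μ := by
  -- reindex ψ ↦ μ - ψ
  have hre : ∑ ψ ∈ (Finset.Iic μ).erase 0, (mc A ψ : ℂ) * cf A N (μ - ψ) =
      ∑ φ ∈ (Finset.Iic μ).erase μ, (mc A (μ - φ) : ℂ) * cf A N φ := by
    refine Finset.sum_nbij' (fun ψ => μ - ψ) (fun φ => μ - φ) ?_ ?_ ?_ ?_ ?_
    · intro ψ hψ
      rw [Finset.mem_erase, Finset.mem_Iic] at hψ ⊢
      refine ⟨?_, tsub_le_self⟩
      intro hc
      have := wt_tsub A hψ.2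
      have h0 := wt_pos A hψ.1
      have h1 := wt_le_of_le A hψ.2
      rw [hc] at this
      omega
    · intro φ hφ
      rw [Finset.mem_erase, Finset.mem_Iic] at hφ ⊢
      refine ⟨?_, tsub_le_self⟩
      intro hc
      have h1 := wt_lt_of_lt A hφ.2 hφ.1
      have h2 : wt A (μ - φ) = wt A μ - wt A φ := wt_tsub A hφ.2
      rw [hc, wt_zero] at h2
      omega
    · intro ψ hψ
      rw [Finset.mem_erase, Finset.mem_Iic] at hψ
      exact tsub_tsub_cancel_of_le hψ.2
    · intro φ hφ
      rw [Finset.mem_erase, Finset.mem_Iic] at hφ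
      exact tsub_tsub_cancel_of_le hφ.2
    · intro ψ hψ
      rw [Finset.mem_erase, Finset.mem_Iic] at hψ
      rw [tsub_tsub_cancel_of_le hψ.2]
  rw [hre]
  -- fiberwise by weight
  have hfib : ∑ φ ∈ (Finset.Iic μ).erase μ, (mc A (μ - φ) : ℂ) * cf A N φ =
      ∑ j ∈ Finset.range (wt A μ), ∑ φ ∈ ((Finset.Iic μ).erase μ).filter (fun φ => wt A φ = j),
        (mc A (μ - φ) : ℂ) * cf A N φ := by
    refine (Finset.sum_fiberwise_of_maps_to ?_ _).symm
    intro φ hφ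
    rw [Finset.mem_erase, Finset.mem_Iic] at hφ
    rw [Finset.mem_range]
    exact wt_lt_of_lt A hφ.2 hφ.1
  rw [hfib]
  have hinner : ∀ j ∈ Finset.range (wt A μ),
      ∑ φ ∈ ((Finset.Iic μ).erase μ).filter (fun φ => wt A φ = j),
        (mc A (μ - φ) : ℂ) * cf A N φ =
      intC (-N + (j : ℤ) - 1) j * (mc A μ : ℂ) := by
    intro j hj
    rw [Finset.mem_range] at hj
    have hset : ((Finset.Iic μ).erase μ).filter (fun φ => wt A φ = j) =
        (Finset.Iic μ).filter (fun φ => wt A φ = j) := by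
      ext φ
      simp only [Finset.mem_filter, Finset.mem_erase, Finset.mem_Iic]
      constructor
      · rintro ⟨⟨_, h1⟩, h2⟩; exact ⟨h1, h2⟩
      · rintro ⟨h1, h2⟩
        refine ⟨⟨?_, h1⟩, h2⟩
        intro hc; subst hc; omega
    rw [hset]
    have : ∀ φ ∈ (Finset.Iic μ).filter (fun φ => wt A φ = j),
        (mc A (μ - φ) : ℂ) * cf A N φ =
        intC (-N + (j : ℤ) - 1) j * ((mc A φ : ℂ) * (mc A (μ - φ) : ℂ)) := by
      intro φ hφ
      rw [Finset.mem_filter] at hφ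
      rw [cf, hφ.2]
      ring
    rw [Finset.sum_congr rfl this, ← Finset.mul_sum]
    congr 1
    have hnat := sum_mc_mul_mc A μ j (le_of_lt hj)
    have : ∑ φ ∈ (Finset.Iic μ).filter (fun φ => wt A φ = j),
        ((mc A φ : ℂ) * (mc A (μ - φ) : ℂ)) =
        ((∑ φ ∈ (Finset.Iic μ).filter (fun φ => wt A φ = j), mc A φ * mc A (μ - φ) : ℕ) : ℂ) := by
      push_cast
      rfl
    rw [this, hnat]
  rw [Finset.sum_congr rfl hinner, ← Finset.sum_mul]
  -- hockey stick
  obtain ⟨k, hk⟩ : ∃ k, wt A μ = k + 1 := by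
    have := wt_pos A hμ
    exact ⟨wt A μ - 1, by omega⟩
  rw [hk, intC_hockey]
  -- final: N * (intC (-N + k) k * mc μ) = -(k+1) * (intC (-N + k) (k+1) * mc μ)
  have hfin := intC_succ_mul (-N + (k : ℤ)) k
  have hz : ((-N + (k : ℤ) : ℤ) : ℂ) - (k : ℂ) = -(N : ℂ) := by push_cast; ring
  rw [hz] at hfin
  rw [cf, hk]
  have harg : (-N + ((k+1 : ℕ) : ℤ) - 1) = -N + (k : ℤ) := by push_cast; ring
  rw [harg]
  push_cast at hfin ⊢
  linear_combination (mc A μ : ℂ) * hfin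

-- ### Algebra lemmas

lemma piF_zero : piF A (0 : A →₀ ℕ) = 1 := by simp [piF]

lemma piF_add (φ ψ : A →₀ ℕ) : piF A (φ + ψ) = piF A φ * piF A ψ :=
  Finsupp.prod_add_index' (fun a => pow_zero a) (fun a m n => pow_add a m n)

lemma dp_zero (u : UEA A L) : dp A L u 0 = 1 := by simp [dp]

lemma dp_one (u : UEA A L) : dp A L u 1 = u := by simp [dp]

lemma dp_mul_self (u : UEA A L) (k : ℕ) :
    dp A L u k * u = ((k + 1 : ℕ) : ℂ) • dp A L u (k + 1) := by
  unfold dp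
  rw [smul_mul_assoc, ← pow_succ, smul_smul]
  congr 1
  have h1 : ((k.factorial : ℂ)) ≠ 0 := Nat.cast_ne_zero.mpr (Nat.factorial_ne_zero k)
  have h2 : (((k+1).factorial : ℂ)) = ((k+1 : ℕ) : ℂ) * (k.factorial : ℂ) := by
    rw [Nat.factorial_succ]; push_cast; ring
  have h3 : ((k + 1 : ℕ) : ℂ) ≠ 0 := Nat.cast_ne_zero.mpr (Nat.succ_ne_zero k)
  rw [h2, mul_inv, ← mul_assoc, mul_inv_cancel₀ h3, one_mul]

lemma hx_comm (h x : L) (N : ℤ) (hhx : ⁅h, x⁆ = N • x) (b a : A) :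
    emb A L h b * emb A L x a =
      emb A L x a * emb A L h b + (N : ℂ) • emb A L x (a * b) := by
  letI : LieRing (UEA A L) := LieRing.ofAssociativeRing
  have key : ⁅emb A L h b, emb A L x a⁆ = (N : ℂ) • emb A L x (a * b) := by
    unfold emb
    rw [← LieHom.map_lie, LieAlgebra.ExtendScalars.bracket_tmul, hhx, mul_comm b a,
      ← Int.cast_smul_eq_zsmul ℂ, TensorProduct.tmul_smul, map_smul]
  rw [Ring.lie_def] at key
  rw [sub_eq_iff_eq_add] at key
  rw [key, add_comm]

lemma p_rec (h : L) (μ : A →₀ ℕ) :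
    ∑ ψ ∈ (Finset.Iic μ).erase 0,
        (mc A ψ : ℂ) • (emb A L h (piF A ψ) * p A L h (μ - ψ)) =
      (-(wt A μ : ℂ)) • p A L h μ := by
  by_cases hμ : μ = 0
  · subst hμ
    have h1 : Finset.Iic (0 : A →₀ ℕ) = {0} := by
      ext φ; simp [Finset.mem_Iic, le_zero_iff]
    rw [h1]
    simp [wt_zero]
  · conv_rhs => rw [p, dif_neg hμ]
    rw [Finset.sum_attach ((Finset.Iic μ).erase 0)
      (fun ψ => (mc A ψ : ℂ) • (emb A L h (piF A ψ) * p A L h (μ - ψ)))]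
    rw [smul_smul]
    have hw : ((wt A μ : ℂ)) ≠ 0 := by
      have h0 := wt_pos A hμ
      exact Nat.cast_ne_zero.mpr (by omega)
    rw [show (-(wt A μ : ℂ)) * (-(1 / (wt A μ : ℂ))) = 1 by field_simp]
    rw [one_smul]


lemma Iic_zero_finsupp : Finset.Iic (0 : A →₀ ℕ) = {0} := by
  ext φ; simp [Finset.mem_Iic, le_zero_iff]

lemma p_zero (h : L) : p A L h 0 = 1 := by rw [p]; simp

lemma step1 (h x : L) (N : ℤ) (hhx : ⁅h, x⁆ = N • x) (a : A) (χ : A →₀ ℕ) :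
    p A L h χ * emb A L x a =
      ∑ φ ∈ Finset.Iic χ, cf A N φ • (emb A L x (a * piF A φ) * p A L h (χ - φ)) := by
  suffices H : ∀ n (χ : A →₀ ℕ), wt A χ = n → p A L h χ * emb A L x a =
      ∑ φ ∈ Finset.Iic χ, cf A N φ • (emb A L x (a * piF A φ) * p A L h (χ - φ)) from
    H (wt A χ) χ rfl
  intro n
  induction n using Nat.strong_induction_on with
  | _ n ih =>
  intro χ hn
  by_cases hχ : χ = 0
  · subst hχ
    rw [Iic_zero_finsupp, Finset.sum_singleton, cf_zero, one_smul, piF_zero, mul_one,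
      tsub_zero, p_zero, one_mul, mul_one]
  · have hw : ((wt A χ : ℂ)) ≠ 0 := by
      have h0 := wt_pos A hχ
      exact Nat.cast_ne_zero.mpr (by omega)
    have expand : ∀ (b c : A) (u : UEA A L) (s t : ℂ),
        s • (emb A L h b * (t • (emb A L x c * u))) =
          (s * t) • (emb A L x c * (emb A L h b * u)) +
          (s * t * (N : ℂ)) • (emb A L x (c * b) * u) := by
      intro b c u s t
      calc s • (emb A L h b * (t • (emb A L x c * u)))
          = (s * t) • ((emb A L h b * emb A L x c) * u) := by
            rw [mul_smul_comm, ← mul_assoc, smul_smul]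
        _ = (s * t) • ((emb A L x c * emb A L h b + (N : ℂ) • emb A L x (c * b)) * u) := by
            rw [hx_comm A L h x N hhx b c]
        _ = (s * t) • (emb A L x c * (emb A L h b * u)) +
            (s * t * (N : ℂ)) • (emb A L x (c * b) * u) := by
            rw [add_mul, smul_mul_assoc, mul_assoc, smul_add, smul_smul]
    conv_lhs => rw [p, dif_neg hχ]
    rw [Finset.sum_attach ((Finset.Iic χ).erase 0)
      (fun ψ => (mc A ψ : ℂ) • (emb A L h (piF A ψ) * p A L h (χ - ψ)))]
    rw [smul_mul_assoc, Finset.sum_mul]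
    have key : ∀ ψ ∈ (Finset.Iic χ).erase 0,
        ((mc A ψ : ℂ) • (emb A L h (piF A ψ) * p A L h (χ - ψ))) * emb A L x a =
        (∑ φ ∈ Finset.Iic (χ - ψ), ((mc A ψ : ℂ) * cf A N φ) •
          (emb A L x (a * piF A φ) * (emb A L h (piF A ψ) * p A L h (χ - ψ - φ)))) +
        (∑ φ ∈ Finset.Iic (χ - ψ), ((mc A ψ : ℂ) * cf A N φ * (N : ℂ)) •
          (emb A L x (a * piF A (φ + ψ)) * p A L h (χ - ψ - φ))) := by
      intro ψ hψ
      rw [Finset.mem_erase, Finset.mem_Iic] at hψ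
      have hlt : wt A (χ - ψ) < n := hn ▸ wt_sub_lt A hψ.2 hψ.1
      rw [smul_mul_assoc, mul_assoc, ih (wt A (χ - ψ)) hlt (χ - ψ) rfl]
      rw [Finset.mul_sum, Finset.smul_sum, ← Finset.sum_add_distrib]
      refine Finset.sum_congr rfl ?_
      intro φ _
      rw [expand (piF A ψ) (a * piF A φ) (p A L h (χ - ψ - φ)) (mc A ψ : ℂ) (cf A N φ)]
      rw [piF_add, ← mul_assoc a]
    rw [Finset.sum_congr rfl key, Finset.sum_add_distrib]
    -- first double sum
    have hS1 : ∑ ψ ∈ (Finset.Iic χ).erase 0, ∑ φ ∈ Finset.Iic (χ - ψ),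
          ((mc A ψ : ℂ) * cf A N φ) •
            (emb A L x (a * piF A φ) * (emb A L h (piF A ψ) * p A L h (χ - ψ - φ))) =
        ∑ φ ∈ Finset.Iic χ, (-(wt A (χ - φ) : ℂ) * cf A N φ) •
          (emb A L x (a * piF A φ) * p A L h (χ - φ)) := by
      have inner : ∀ φ ∈ Finset.Iic χ,
          (-(wt A (χ - φ) : ℂ) * cf A N φ) •
            (emb A L x (a * piF A φ) * p A L h (χ - φ)) =
          ∑ ψ ∈ (Finset.Iic (χ - φ)).erase 0, ((mc A ψ : ℂ) * cf A N φ) •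
            (emb A L x (a * piF A φ) * (emb A L h (piF A ψ) * p A L h (χ - φ - ψ))) := by
        intro φ _
        have hrec := p_rec A L h (χ - φ)
        calc (-(wt A (χ - φ) : ℂ) * cf A N φ) •
              (emb A L x (a * piF A φ) * p A L h (χ - φ))
            = cf A N φ • (emb A L x (a * piF A φ) *
                ((-(wt A (χ - φ) : ℂ)) • p A L h (χ - φ))) := by
              rw [mul_smul_comm, smul_smul, mul_comm]
          _ = cf A N φ • (emb A L x (a * piF A φ) *
                (∑ ψ ∈ (Finset.Iic (χ - φ)).erase 0,
                  (mc A ψ : ℂ) • (emb A L h (piF A ψ) * p A L h (χ - φ - ψ)))) := by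
              rw [hrec]
          _ = _ := by
              rw [Finset.mul_sum, Finset.smul_sum]
              refine Finset.sum_congr rfl ?_
              intro ψ _
              rw [mul_smul_comm, smul_smul, mul_comm]
      rw [Finset.sum_congr rfl inner, Finset.sum_sigma', Finset.sum_sigma']
      refine Finset.sum_nbij' (fun q => ⟨q.2, q.1⟩) (fun q => ⟨q.2, q.1⟩) ?_ ?_ ?_ ?_ ?_
      · rintro ⟨ψ, φ⟩ hq
        simp only [Finset.mem_sigma, Finset.mem_erase, Finset.mem_Iic] at hq ⊢
        obtain ⟨⟨hψ0, hψχ⟩, hφ⟩ := hq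
        have hψφ : ψ + φ ≤ χ := (le_tsub_iff_left hψχ).mp hφ
        refine ⟨le_trans ?_ hψφ, hψ0, ?_⟩
        · exact le_add_self
        · exact (le_tsub_iff_right (le_trans le_add_self hψφ)).mpr hψφ
      · rintro ⟨φ, ψ⟩ hq
        simp only [Finset.mem_sigma, Finset.mem_erase, Finset.mem_Iic] at hq ⊢
        obtain ⟨hφχ, hψ0, hψ⟩ := hq
        have hψφ : ψ + φ ≤ χ := (le_tsub_iff_right hφχ).mp hψ
        have hψχ : ψ ≤ χ := le_trans (le_add_right le_rfl) hψφ
        refine ⟨⟨hψ0, hψχ⟩, ?_⟩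
        exact (le_tsub_iff_left hψχ).mpr hψφ
      · rintro ⟨ψ, φ⟩ _; rfl
      · rintro ⟨φ, ψ⟩ _; rfl
      · rintro ⟨ψ, φ⟩ _
        dsimp only
        rw [tsub_right_comm]
    -- second double sum
    have hS2 : ∑ ψ ∈ (Finset.Iic χ).erase 0, ∑ φ ∈ Finset.Iic (χ - ψ),
          ((mc A ψ : ℂ) * cf A N φ * (N : ℂ)) •
            (emb A L x (a * piF A (φ + ψ)) * p A L h (χ - ψ - φ)) =
        ∑ μ ∈ Finset.Iic χ, (-(wt A μ : ℂ) * cf A N μ) •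
          (emb A L x (a * piF A μ) * p A L h (χ - μ)) := by
      have hstep : ∑ ψ ∈ (Finset.Iic χ).erase 0, ∑ φ ∈ Finset.Iic (χ - ψ),
            ((mc A ψ : ℂ) * cf A N φ * (N : ℂ)) •
              (emb A L x (a * piF A (φ + ψ)) * p A L h (χ - ψ - φ)) =
          ∑ μ ∈ (Finset.Iic χ).erase 0, ∑ ψ ∈ (Finset.Iic μ).erase 0,
            ((mc A ψ : ℂ) * cf A N (μ - ψ) * (N : ℂ)) •
              (emb A L x (a * piF A μ) * p A L h (χ - μ)) := by
        rw [Finset.sum_sigma', Finset.sum_sigma']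
        refine Finset.sum_nbij' (fun q => ⟨q.1 + q.2, q.1⟩) (fun q => ⟨q.2, q.1 - q.2⟩)
          ?_ ?_ ?_ ?_ ?_
        · rintro ⟨ψ, φ⟩ hq
          simp only [Finset.mem_sigma, Finset.mem_erase, Finset.mem_Iic] at hq ⊢
          obtain ⟨⟨hψ0, hψχ⟩, hφ⟩ := hq
          have hψφ : ψ + φ ≤ χ := (le_tsub_iff_left hψχ).mp hφ
          refine ⟨⟨?_, hψφ⟩, hψ0, le_add_right le_rfl⟩
          intro hc
          apply hψ0
          have := le_add_right (le_refl ψ) (c := φ)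
          rw [hc] at this
          exact le_antisymm (le_trans this (le_refl 0)) zero_le
        · rintro ⟨μ, ψ⟩ hq
          simp only [Finset.mem_sigma, Finset.mem_erase, Finset.mem_Iic] at hq ⊢
          obtain ⟨⟨hμ0, hμχ⟩, hψ0, hψμ⟩ := hq
          exact ⟨⟨hψ0, le_trans hψμ hμχ⟩, tsub_le_tsub_right hμχ ψ⟩
        · rintro ⟨ψ, φ⟩ _
          dsimp only
          rw [Sigma.mk.inj_iff]
          exact ⟨rfl, heq_of_eq (add_tsub_cancel_left ψ φ)⟩
        · rintro ⟨μ, ψ⟩ hq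
          simp only [Finset.mem_sigma, Finset.mem_erase, Finset.mem_Iic] at hq
          dsimp only
          rw [Sigma.mk.inj_iff]
          exact ⟨add_tsub_cancel_of_le hq.2.2, HEq.rfl⟩
        · rintro ⟨ψ, φ⟩ _
          dsimp only
          rw [add_tsub_cancel_left, add_comm φ ψ, tsub_tsub]
      rw [hstep]
      have inner2 : ∀ μ ∈ (Finset.Iic χ).erase 0,
          ∑ ψ ∈ (Finset.Iic μ).erase 0,
            ((mc A ψ : ℂ) * cf A N (μ - ψ) * (N : ℂ)) •
              (emb A L x (a * piF A μ) * p A L h (χ - μ)) =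
          (-(wt A μ : ℂ) * cf A N μ) •
            (emb A L x (a * piF A μ) * p A L h (χ - μ)) := by
        intro μ hμ
        rw [Finset.mem_erase, Finset.mem_Iic] at hμ
        rw [← Finset.sum_smul]
        congr 1
        have hL5 := L5 A N μ hμ.1
        calc ∑ ψ ∈ (Finset.Iic μ).erase 0, (mc A ψ : ℂ) * cf A N (μ - ψ) * (N : ℂ)
            = (N : ℂ) * ∑ ψ ∈ (Finset.Iic μ).erase 0, (mc A ψ : ℂ) * cf A N (μ - ψ) := by
              rw [Finset.mul_sum]
              refine Finset.sum_congr rfl ?_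
              intro ψ _; ring
          _ = -(wt A μ : ℂ) * cf A N μ := hL5
      rw [Finset.sum_congr rfl inner2]
      refine Finset.sum_erase _ ?_
      rw [wt_zero]
      norm_num
    rw [hS1, hS2, ← Finset.sum_add_distrib]
    have final : ∀ φ ∈ Finset.Iic χ,
        (-(wt A (χ - φ) : ℂ) * cf A N φ) •
            (emb A L x (a * piF A φ) * p A L h (χ - φ)) +
          (-(wt A φ : ℂ) * cf A N φ) •
            (emb A L x (a * piF A φ) * p A L h (χ - φ)) =
        (-(wt A χ : ℂ) * cf A N φ) •
          (emb A L x (a * piF A φ) * p A L h (χ - φ)) := by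
      intro φ hφ
      rw [Finset.mem_Iic] at hφ
      rw [← add_smul]
      congr 1
      have hsum : wt A (χ - φ) + wt A φ = wt A χ := by
        rw [← wt_add, tsub_add_cancel_of_le hφ]
      have : (wt A (χ - φ) : ℂ) + (wt A φ : ℂ) = (wt A χ : ℂ) := by
        exact_mod_cast congrArg (fun m : ℕ => (m : ℂ)) hsum
      linear_combination -cf A N φ * this
    rw [Finset.sum_congr rfl final, Finset.smul_sum]
    refine Finset.sum_congr rfl ?_
    intro φ _
    rw [smul_smul]
    congr 1
    field_simp


-- ### divided powers and the product `G`

lemma dp_succ (u : UEA A L) (k : ℕ) :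
    dp A L u (k + 1) = (((k + 1 : ℕ) : ℂ))⁻¹ • (dp A L u k * u) := by
  rw [dp_mul_self, smul_smul, inv_mul_cancel₀ (Nat.cast_ne_zero.mpr (Nat.succ_ne_zero k)),
    one_smul]

/-- `σ(ψ) = ∑_φ ψ(φ)·φ`. -/
def sg (ψ : (A →₀ ℕ) →₀ ℕ) : A →₀ ℕ := ψ.sum fun φ t => t • φ

lemma sg_zero : sg A 0 = 0 := by simp [sg]

lemma sg_add_single (ψ : (A →₀ ℕ) →₀ ℕ) (φ : A →₀ ℕ) :
    sg A (ψ + Finsupp.single φ 1) = sg A ψ + φ := by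
  unfold sg
  rw [Finsupp.sum_add_index' (fun φ' => zero_nsmul φ') (fun φ' m n => add_nsmul φ' m n),
    Finsupp.sum_single_index (zero_nsmul φ), one_nsmul]

lemma tot_add_single (ψ : (A →₀ ℕ) →₀ ℕ) (φ : A →₀ ℕ) :
    wt (A →₀ ℕ) (ψ + Finsupp.single φ 1) = wt (A →₀ ℕ) ψ + 1 := by
  rw [wt_add, wt_single]

variable (x : L) (N : ℤ) (a : A)

/-- the product over `supp ψ` of `(c_φ (x ⊗ a π(φ)))^{(ψ(φ))}`. -/
def G (ψ : (A →₀ ℕ) →₀ ℕ) : UEA A L :=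
  ψ.support.noncommProd
    (fun φ => dp A L
      (cf A N φ •
        emb A L x (a * piF A φ)) (ψ φ))
    (fun φ _ φ' _ _ => commute_smul_dp A L (lie_self x) _ _ _ _ _ _)

lemma G_eq_prod_superset (ψ : (A →₀ ℕ) →₀ ℕ) (t : Finset (A →₀ ℕ)) (ht : ψ.support ⊆ t) :
    G A L x N a ψ = t.noncommProd
      (fun φ => dp A L (cf A N φ •
        emb A L x (a * piF A φ)) (ψ φ))
      (fun φ _ φ' _ _ => commute_smul_dp A L (lie_self x) _ _ _ _ _ _) := by
  have hu : t = ψ.support ∪ (t \ ψ.support) := by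
    rw [Finset.union_sdiff_of_subset ht]
  rw [G]
  conv_rhs => rw [hu]
  refine Eq.trans ?_ (Finset.noncommProd_union_of_disjoint (Finset.disjoint_sdiff) _ _).symm
  have h1 : (t \ ψ.support).noncommProd
      (fun φ => dp A L (cf A N φ •
        emb A L x (a * piF A φ)) (ψ φ)) (fun φ _ φ' _ _ => commute_smul_dp A L (lie_self x) _ _ _ _ _ _) = 1 := by
    refine (Finset.noncommProd_eq_pow_card _ _ _ 1 ?_).trans (one_pow _)
    intro φ hφ
    rw [Finset.mem_sdiff] at hφ
    rw [Finsupp.notMem_support_iff.mp hφ.2]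
    exact dp_zero A L _
  exact (mul_one _).symm.trans (congrArg (HMul.hMul _) h1.symm)

lemma G_zero : G A L x N a 0 = 1 := by
  rw [G_eq_prod_superset A L x N a 0 ∅ (by simp)]
  exact Finset.noncommProd_empty _ _

lemma G_merge (ψ : (A →₀ ℕ) →₀ ℕ) (φ : A →₀ ℕ) :
    G A L x N a ψ *
      (cf A N φ • emb A L x (a * piF A φ)) =
    ((ψ φ + 1 : ℕ) : ℂ) • G A L x N a (ψ + Finsupp.single φ 1) := by
  set t : Finset (A →₀ ℕ) := insert φ ψ.support with ht
  set f : (A →₀ ℕ) → UEA A L := fun φ' => dp A L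
    (cf A N φ' •
      emb A L x (a * piF A φ')) (ψ φ') with hf
  set f' : (A →₀ ℕ) → UEA A L := fun φ' => dp A L
    (cf A N φ' •
      emb A L x (a * piF A φ')) ((ψ + Finsupp.single φ 1 : (A →₀ ℕ) →₀ ℕ) φ') with hf'
  have hsub : ψ.support ⊆ t := Finset.subset_insert _ _
  have hsub' : (ψ + Finsupp.single φ 1).support ⊆ t := by
    refine Finset.Subset.trans Finsupp.support_add ?_
    rw [Finsupp.support_single_ne_zero φ (one_ne_zero)]
    intro φ' hφ'
    rw [Finset.mem_union] at hφ'
    rcases hφ' with h1 | h1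
    · exact Finset.mem_insert_of_mem h1
    · rw [Finset.mem_singleton] at h1
      exact h1 ▸ Finset.mem_insert_self _ _
  have hφt : φ ∈ t := Finset.mem_insert_self _ _
  rw [G_eq_prod_superset A L x N a ψ t hsub, G_eq_prod_superset A L x N a _ t hsub']
  rw [← Finset.noncommProd_erase_mul t hφt f
    (fun φ'' _ φ' _ _ => commute_smul_dp A L (lie_self x) _ _ _ _ _ _)]
  rw [← Finset.noncommProd_erase_mul t hφt f'
    (fun φ'' _ φ' _ _ => commute_smul_dp A L (lie_self x) _ _ _ _ _ _)]
  have hcongr : (t.erase φ).noncommProd f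
        (fun φ'' h1 φ' h2 h3 => commute_smul_dp A L (lie_self x) _ _ _ _ _ _) =
      (t.erase φ).noncommProd f'
        (fun φ'' h1 φ' h2 h3 => commute_smul_dp A L (lie_self x) _ _ _ _ _ _) := by
    refine Finset.noncommProd_congr rfl ?_ _
    intro φ' hφ'
    rw [Finset.mem_erase] at hφ'
    rw [hf, hf']
    dsimp only
    rw [Finsupp.add_apply, Finsupp.single_apply, if_neg (fun hc => hφ'.1 hc.symm), add_zero]
  have hfφ' : f' φ = dp A L
      (cf A N φ •
        emb A L x (a * piF A φ)) (ψ φ + 1) := by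
    rw [hf']
    dsimp only
    rw [Finsupp.add_apply, Finsupp.single_eq_same]
  rw [mul_assoc, hcongr]
  have hstep : f φ * (cf A N φ •
      emb A L x (a * piF A φ)) = ((ψ φ + 1 : ℕ) : ℂ) • f' φ := by
    have hfφ : f φ = dp A L (cf A N φ •
        emb A L x (a * piF A φ)) (ψ φ) := rfl
    rw [hfφ, dp_mul_self, hfφ']
  rw [hstep, mul_smul_comm]


/-- the finite set `𝓢_r(χ)`. -/
def bigT (r : ℕ) (χ : A →₀ ℕ) : Finset ((A →₀ ℕ) →₀ ℕ) :=
  (Finset.Iic ((Finset.Iic χ).sum fun φ => Finsupp.single φ r)).filter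
    (fun ψ => ψ.sum (fun _ t => t) = r ∧ ψ.sum (fun φ t => t • φ) ≤ χ)

lemma tot_eq_wt (ψ : (A →₀ ℕ) →₀ ℕ) : ψ.sum (fun _ t => t) = wt (A →₀ ℕ) ψ := rfl

lemma sg_eq_sum (ψ : (A →₀ ℕ) →₀ ℕ) : ψ.sum (fun φ t => t • φ) = sg A ψ := rfl

lemma mem_bigT (r : ℕ) (χ : A →₀ ℕ) (ψ : (A →₀ ℕ) →₀ ℕ) :
    ψ ∈ bigT A r χ ↔ (ψ.sum (fun _ t => t) = r ∧ ψ.sum (fun φ t => t • φ) ≤ χ) := by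
  rw [bigT, Finset.mem_filter]
  constructor
  · exact fun h => h.2
  · intro hψ
    refine ⟨Finset.mem_Iic.mpr (Finsupp.le_def.mpr ?_), hψ⟩
    intro φ₀
    by_cases h0 : ψ φ₀ = 0
    · rw [h0]; exact Nat.zero_le _
    · have hφ₀ : φ₀ ∈ ψ.support := Finsupp.mem_support_iff.mpr h0
      have h1 : ψ φ₀ • φ₀ ≤ sg A ψ := by
        unfold sg Finsupp.sum
        exact Finset.single_le_sum (f := fun φ => ψ φ • φ) (fun _ _ => zero_le) hφ₀
      have h2 : φ₀ ≤ χ := by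
        refine le_trans ?_ (le_trans h1 hψ.2)
        obtain ⟨k, hk⟩ : ∃ k, ψ φ₀ = k + 1 := ⟨ψ φ₀ - 1, by omega⟩
        rw [hk, succ_nsmul]
        exact le_add_self
      have h3 : ψ φ₀ ≤ r := by
        rw [← hψ.1]
        unfold Finsupp.sum
        exact Finset.single_le_sum (f := fun φ => ψ φ) (fun _ _ => Nat.zero_le _) hφ₀
      have h4 : ((Finset.Iic χ).sum fun φ => Finsupp.single φ r) φ₀ = r := by
        rw [Finset.sum_apply']
        simp only [Finsupp.single_apply]
        rw [Finset.sum_ite_eq' (Finset.Iic χ) φ₀ (fun _ => r),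
          if_pos (Finset.mem_Iic.mpr h2)]
      rw [h4]
      exact h3

lemma step2 (h x : L) (N : ℤ) (hhx : ⁅h, x⁆ = N • x) (a : A) :
    ∀ (r : ℕ) (χ : A →₀ ℕ), p A L h χ * dp A L (emb A L x a) r =
      ∑ ψ ∈ bigT A r χ, G A L x N a ψ * p A L h (χ - sg A ψ) := by
  intro r
  induction r with
  | zero =>
    intro χ
    have hT : bigT A 0 χ = {0} := by
      ext ψ
      rw [mem_bigT, Finset.mem_singleton]
      constructor
      · rintro ⟨h1, _⟩
        by_contra hne
        have := wt_pos (A →₀ ℕ) hne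
        rw [tot_eq_wt] at h1
        omega
      · rintro rfl
        exact ⟨by simp [Finsupp.sum_zero_index], by simp [Finsupp.sum_zero_index]⟩
    rw [hT, Finset.sum_singleton, G_zero, sg_zero, tsub_zero, dp_zero, one_mul, mul_one]
  | succ r ih =>
    intro χ
    have hr1 : (((r + 1 : ℕ)) : ℂ) ≠ 0 := Nat.cast_ne_zero.mpr (Nat.succ_ne_zero r)
    rw [dp_succ, mul_smul_comm, ← mul_assoc, ih χ, Finset.sum_mul]
    have key : ∀ ψ ∈ bigT A r χ,
        (G A L x N a ψ * p A L h (χ - sg A ψ)) * emb A L x a =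
        ∑ φ ∈ Finset.Iic (χ - sg A ψ), (((ψ φ + 1 : ℕ)) : ℂ) •
          (G A L x N a (ψ + Finsupp.single φ 1) *
            p A L h (χ - sg A (ψ + Finsupp.single φ 1))) := by
      intro ψ hψ
      rw [mul_assoc, step1 A L h x N hhx a (χ - sg A ψ), Finset.mul_sum]
      refine Finset.sum_congr rfl ?_
      intro φ hφ
      rw [Finset.mem_Iic] at hφ
      have harg : χ - sg A ψ - φ = χ - sg A (ψ + Finsupp.single φ 1) := by
        rw [sg_add_single, tsub_tsub]
      rw [harg, ← smul_mul_assoc, ← mul_assoc, G_merge, smul_mul_assoc]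
    rw [Finset.sum_congr rfl key]
    have hre : ∑ ψ ∈ bigT A r χ, ∑ φ ∈ Finset.Iic (χ - sg A ψ), (((ψ φ + 1 : ℕ)) : ℂ) •
          (G A L x N a (ψ + Finsupp.single φ 1) *
            p A L h (χ - sg A (ψ + Finsupp.single φ 1))) =
        ∑ ψ' ∈ bigT A (r + 1) χ, ∑ φ ∈ ψ'.support, (((ψ' φ : ℕ)) : ℂ) •
          (G A L x N a ψ' * p A L h (χ - sg A ψ')) := by
      rw [Finset.sum_sigma', Finset.sum_sigma']
      refine Finset.sum_nbij' (fun q => ⟨q.1 + Finsupp.single q.2 1, q.2⟩)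
        (fun q => ⟨q.1 - Finsupp.single q.2 1, q.2⟩) ?_ ?_ ?_ ?_ ?_
      · rintro ⟨ψ, φ⟩ hq
        simp only [Finset.mem_sigma, Finset.mem_Iic] at hq ⊢
        obtain ⟨hψ, hφ⟩ := hq
        rw [mem_bigT] at hψ ⊢
        rw [tot_eq_wt] at hψ ⊢
        rw [sg_eq_sum] at hψ ⊢
        constructor
        · constructor
          · rw [tot_add_single, hψ.1]
          · rw [sg_add_single]
            exact (le_tsub_iff_left hψ.2).mp hφ
        · rw [Finsupp.mem_support_iff, Finsupp.add_apply, Finsupp.single_eq_same]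
          omega
      · rintro ⟨ψ', φ⟩ hq
        simp only [Finset.mem_sigma, Finset.mem_Iic] at hq ⊢
        obtain ⟨hψ', hφ⟩ := hq
        rw [mem_bigT] at hψ'
        rw [tot_eq_wt, sg_eq_sum] at hψ'
        rw [Finsupp.mem_support_iff] at hφ
        have hsingle : Finsupp.single φ 1 ≤ ψ' := Finsupp.single_le_iff.mpr (by omega)
        have hrec : (ψ' - Finsupp.single φ 1) + Finsupp.single φ 1 = ψ' :=
          tsub_add_cancel_of_le hsingle
        have hsg : sg A (ψ' - Finsupp.single φ 1) + φ = sg A ψ' := by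
          conv_rhs => rw [← hrec]
          rw [sg_add_single]
        have htot : wt (A →₀ ℕ) (ψ' - Finsupp.single φ 1) + 1 = r + 1 := by
          rw [← hψ'.1]
          conv_rhs => rw [← hrec]
          rw [tot_add_single]
        have hsgle : sg A (ψ' - Finsupp.single φ 1) ≤ χ := by
          refine le_trans ?_ hψ'.2
          rw [← hsg]
          exact le_add_right le_rfl
        rw [mem_bigT, tot_eq_wt, sg_eq_sum]
        refine ⟨⟨by omega, hsgle⟩, ?_⟩
        exact (le_tsub_iff_left hsgle).mpr (by rw [hsg]; exact hψ'.2)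
      · rintro ⟨ψ, φ⟩ _
        dsimp only
        rw [Sigma.mk.inj_iff]
        exact ⟨add_tsub_cancel_right _ _, HEq.rfl⟩
      · rintro ⟨ψ', φ⟩ hq
        simp only [Finset.mem_sigma] at hq
        rw [Finsupp.mem_support_iff] at hq
        have hsingle : Finsupp.single φ 1 ≤ ψ' := Finsupp.single_le_iff.mpr (by omega)
        dsimp only
        rw [Sigma.mk.inj_iff]
        exact ⟨tsub_add_cancel_of_le hsingle, HEq.rfl⟩
      · rintro ⟨ψ, φ⟩ _
        dsimp only
        rw [Finsupp.add_apply, Finsupp.single_eq_same]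
    rw [hre]
    have hinner : ∀ ψ' ∈ bigT A (r + 1) χ,
        ∑ φ ∈ ψ'.support, (((ψ' φ : ℕ)) : ℂ) •
          (G A L x N a ψ' * p A L h (χ - sg A ψ')) =
        (((r + 1 : ℕ)) : ℂ) • (G A L x N a ψ' * p A L h (χ - sg A ψ')) := by
      intro ψ' hψ'
      rw [← Finset.sum_smul]
      congr 1
      rw [← Nat.cast_sum]
      congr 1
      rw [mem_bigT] at hψ'
      exact hψ'.1
    rw [Finset.sum_congr rfl hinner, ← Finset.smul_sum, smul_smul,
      inv_mul_cancel₀ hr1, one_smul]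

/-- straightening `p_h(χ)` past `(x ⊗ a)^{(r)}`, where `⁅h, x⁆ = N x`:
`p_h(χ) (x ⊗ a)^{(r)} = ∑_{ψ ∈ 𝓢_r(χ)}
(∏_{φ ∈ supp ψ} (C(-N + |φ| - 1, |φ|) m(φ) (x ⊗ a π(φ)))^{(ψ(φ))}) p_h(χ - ∑_φ ψ(φ) φ)`. -/
theorem stmt7 (h x : L) (N : ℤ) (hhx : ⁅h, x⁆ = N • x) (a : A) (r : ℕ) (χ : A →₀ ℕ) :
    p A L h χ * dp A L (emb A L x a) r =
      ∑ᶠ (ψ : (A →₀ ℕ) →₀ ℕ)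
          (_ : ψ.sum (fun _ t => t) = r ∧ ψ.sum (fun φ t => t • φ) ≤ χ),
        ψ.support.noncommProd
            (fun φ => dp A L
              ((intC (-N + (wt A φ : ℤ) - 1) (wt A φ) * (mc A φ : ℂ)) •
                emb A L x (a * piF A φ)) (ψ φ))
            (fun φ _ φ' _ _ => commute_smul_dp A L (lie_self x) _ _ _ _ _ _) *
          p A L h (χ - ψ.sum (fun φ t => t • φ)) := by
  rw [finsum_cond_eq_sum_of_cond_iff _ (fun {ψ} _ => (mem_bigT A r χ ψ).symm)]
  exact step2 A L h x N hhx a r χ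

end MapSuper
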